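/- Let g ≥ 1 and τ = (τ_{ij}) ∈ M_g(ℂ) with det(Im τ) ≠ 0. Assume τ satisfies the Riemann relations (so that X_τ is an abelian variety) and that F_τ is a finite extension of ℚ whose degree [F_τ : ℚ] is odd. Then ρ(τ) ≤ g(g+1)/2. -/

import Mathlib

open Matrix Module IntermediateField
open scoped ComplexOrder

noncomputable section

/-- The period matrix `Π(τ) = (τ | I_g)`, a `g × 2g` complex matrix. -/
def PeriodMatrix (g : ℕ) (τ : Matrix (Fin g) (Fin g) ℂ) :
    Matrix (Fin g) (Fin g ⊕ Fin g) ℂ :=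
  Matrix.fromCols τ 1

/-- `F_τ`: the subfield of `ℂ` generated over `ℚ` by the entries of `τ`. -/
def EntryField (g : ℕ) (τ : Matrix (Fin g) (Fin g) ℂ) : IntermediateField ℚ ℂ :=
  IntermediateField.adjoin ℚ {x : ℂ | ∃ i j, τ i j = x}

/-- Entrywise inclusion `ℚ → ℂ` on square matrices, as an algebra homomorphism. -/
def mapQC (g : ℕ) : Matrix (Fin g) (Fin g) ℚ →ₐ[ℚ] Matrix (Fin g) (Fin g) ℂ :=
  (Algebra.ofId ℚ ℂ).mapMatrix

/-- The ℚ-vector space `N(τ)` of triples `(A,B,C)` of rational `g × g` matrices with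
`A, C` skew-symmetric and `A - Bτ + τᵗBᵗ + τᵗCτ = 0`; its dimension is the Picard
number of the complex torus `X_τ`. -/
def NSSpace (g : ℕ) (τ : Matrix (Fin g) (Fin g) ℂ) :
    Submodule ℚ (Matrix (Fin g) (Fin g) ℚ × Matrix (Fin g) (Fin g) ℚ ×
      Matrix (Fin g) (Fin g) ℚ) where
  carrier := {x | x.1ᵀ = -x.1 ∧ x.2.2ᵀ = -x.2.2 ∧
    mapQC g x.1 - mapQC g x.2.1 * τ + τᵀ * (mapQC g x.2.1)ᵀ + τᵀ * mapQC g x.2.2 * τ = 0}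
  add_mem' := by
    rintro a b ⟨ha1, ha2, ha3⟩ ⟨hb1, hb2, hb3⟩
    refine ⟨by simp [Matrix.transpose_add, ha1, hb1]; abel,
      by simp [Matrix.transpose_add, ha2, hb2]; abel, ?_⟩
    have key : mapQC g (a + b).1 - mapQC g (a + b).2.1 * τ + τᵀ * (mapQC g (a + b).2.1)ᵀ
        + τᵀ * mapQC g (a + b).2.2 * τ
        = (mapQC g a.1 - mapQC g a.2.1 * τ + τᵀ * (mapQC g a.2.1)ᵀ + τᵀ * mapQC g a.2.2 * τ)
        + (mapQC g b.1 - mapQC g b.2.1 * τ + τᵀ * (mapQC g b.2.1)ᵀ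
          + τᵀ * mapQC g b.2.2 * τ) := by
      simp only [Prod.fst_add, Prod.snd_add, map_add, Matrix.add_mul, Matrix.mul_add,
        Matrix.transpose_add]
      abel
    rw [key, ha3, hb3, add_zero]
  zero_mem' := by
    refine ⟨by simp, by simp, ?_⟩
    simp
  smul_mem' := by
    rintro q a ⟨ha1, ha2, ha3⟩
    refine ⟨by simp [Matrix.transpose_smul, ha1], by simp [Matrix.transpose_smul, ha2], ?_⟩
    have key : mapQC g (q • a).1 - mapQC g (q • a).2.1 * τ + τᵀ * (mapQC g (q • a).2.1)ᵀ
        + τᵀ * mapQC g (q • a).2.2 * τ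
        = q • (mapQC g a.1 - mapQC g a.2.1 * τ + τᵀ * (mapQC g a.2.1)ᵀ
          + τᵀ * mapQC g a.2.2 * τ) := by
      simp only [Prod.smul_fst, Prod.smul_snd, _root_.map_smul, Matrix.transpose_smul,
        smul_mul_assoc, mul_smul_comm]
      module
    rw [key, ha3, smul_zero]

/-- The Picard number `ρ(τ) = dim_ℚ N(τ)` of the complex torus `X_τ`. -/
def picard (g : ℕ) (τ : Matrix (Fin g) (Fin g) ℂ) : ℕ :=
  Module.finrank ℚ (NSSpace g τ)

/-- `τ` satisfies the Riemann relations, i.e. `X_τ` is an abelian variety: there is an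
integral alternating nondegenerate `E` with `Π E⁻¹ Πᵗ = 0` and `i Π E⁻¹ Π*` positive
definite. -/
def RiemannRelations (g : ℕ) (τ : Matrix (Fin g) (Fin g) ℂ) : Prop :=
  ∃ E : Matrix (Fin g ⊕ Fin g) (Fin g ⊕ Fin g) ℤ, Eᵀ = -E ∧ E.det ≠ 0 ∧
    PeriodMatrix g τ * (E.map (Int.cast : ℤ → ℂ))⁻¹ * (PeriodMatrix g τ)ᵀ = 0 ∧
    (Complex.I • (PeriodMatrix g τ * (E.map (Int.cast : ℤ → ℂ))⁻¹ *
      (PeriodMatrix g τ)ᴴ)).PosDef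


/-!
Encode a triple `(A, B, C) ∈ N(τ)` as the rational alternating form `M = [[C, Bᵀ], [-B, A]]`
on `ℚ^{2g}`; the defining relation says that the graph of `τ` (the column span of `(τ; 1)`) is
isotropic for `M`. As `M` is rational, the graph of `τ^ψ` is then isotropic for every embedding
`ψ : F_τ → ℂ`. Take `ψ` to be complex conjugation and a real embedding `σ`, which exists because
`[F_τ : ℚ]` is odd. The three graphs are pairwise transversal: `τ - τ̄ = 2i Im τ`, and a vector
killing `τ - τ^σ` would be isotropic for the definite form `i Π E⁻¹ Π*`, since the real matrix
`τ^σ` satisfies the conjugated relation `Π E⁻¹ Πᵀ = 0`.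

An alternating form for which two transversal graphs `V₁, V₂` are isotropic is determined by its
pairing `V₁ × V₂ → ℂ`, and isotropy of a third transversal graph makes this pairing, read through
the isomorphisms `V₃ ≅ V₁`, `V₃ ≅ V₂`, symmetric. So these forms span a complex space of dimension
at most `g(g+1)/2`, and forms independent over `ℚ` remain independent over `ℂ`.
-/

section GraphPairing

variable {n R : Type*} [Fintype n] [DecidableEq n] [CommRing R]

/-- Its columns span the graph `{(s v, v)}` of `s`. -/
def graphMatrix (s : Matrix n n R) : Matrix (n ⊕ n) n R :=
  fromRows s 1

def graphPairing (s t : Matrix n n R) : Matrix (n ⊕ n) (n ⊕ n) R →ₗ[R] Matrix n n R where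
  toFun M := (graphMatrix s)ᵀ * M * graphMatrix t
  map_add' M N := by rw [Matrix.mul_add, Matrix.add_mul]
  map_smul' c M := by rw [Matrix.mul_smul, Matrix.smul_mul]; rfl

def IsotropicGraph (M : Matrix (n ⊕ n) (n ⊕ n) R) (s : Matrix n n R) : Prop :=
  graphPairing s s M = 0

theorem graphPairing_apply (s t : Matrix n n R) (M : Matrix (n ⊕ n) (n ⊕ n) R) :
    graphPairing s t M = (graphMatrix s)ᵀ * M * graphMatrix t := rfl

theorem graphPairing_swap {M : Matrix (n ⊕ n) (n ⊕ n) R} (hM : Mᵀ = -M) (s t : Matrix n n R) :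
    graphPairing t s M = -(graphPairing s t M)ᵀ := by
  simp only [graphPairing_apply, transpose_mul, transpose_transpose, hM, Matrix.mul_neg,
    Matrix.neg_mul, neg_neg, Matrix.mul_assoc]

theorem graphPairing_map {S : Type*} [CommRing S] (f : R →+* S) (s t : Matrix n n R)
    (M : Matrix (n ⊕ n) (n ⊕ n) R) :
    (graphPairing s t M).map f = graphPairing (s.map f) (t.map f) (M.map f) := by
  simp only [graphPairing_apply, graphMatrix, Matrix.map_mul, transpose_map, fromRows_map,
    Matrix.map_one _ f.map_zero f.map_one]

theorem isotropicGraph_map_iff {S : Type*} [CommRing S] {f : R →+* S}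
    (hf : Function.Injective f) {M : Matrix (n ⊕ n) (n ⊕ n) R} {s : Matrix n n R} :
    IsotropicGraph (M.map f) (s.map f) ↔ IsotropicGraph M s := by
  rw [IsotropicGraph, IsotropicGraph, ← graphPairing_map, ← Matrix.map_zero f f.map_zero,
    (Matrix.map_injective hf).eq_iff]

theorem isotropicGraph_transpose_iff {M : Matrix (n ⊕ n) (n ⊕ n) R} {s : Matrix n n R} :
    IsotropicGraph M sᵀ ↔
      fromCols s (1 : Matrix n n R) * M * (fromCols s (1 : Matrix n n R))ᵀ = 0 := by
  simp only [IsotropicGraph, graphPairing_apply, graphMatrix, transpose_fromRows,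
    transpose_fromCols, transpose_transpose, transpose_one]

-- The paper's relation `A - Bτ + τᵀBᵀ + τᵀCτ = 0` says that the graph of `τ` is isotropic
-- for the form with blocks `[[C, Bᵀ], [-B, A]]`.
theorem graphPairing_fromBlocks (s A B C : Matrix n n R) :
    graphPairing s s (fromBlocks C Bᵀ (-B) A) = A - B * s + sᵀ * Bᵀ + sᵀ * C * s := by
  simp only [graphPairing_apply, graphMatrix, transpose_fromRows, transpose_one,
    fromCols_mul_fromBlocks, fromCols_mul_fromRows, Matrix.one_mul, Matrix.mul_one,
    Matrix.add_mul, Matrix.neg_mul]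
  abel

theorem graphPairing_eq_of_graphMatrix_eq {s₁ s₂ s₃ P Q : Matrix n n R}
    (h : graphMatrix s₃ = graphMatrix s₁ * P + graphMatrix s₂ * Q)
    (M : Matrix (n ⊕ n) (n ⊕ n) R) :
    graphPairing s₃ s₃ M = Pᵀ * graphPairing s₁ s₁ M * P + Pᵀ * graphPairing s₁ s₂ M * Q
      + Qᵀ * graphPairing s₂ s₁ M * P + Qᵀ * graphPairing s₂ s₂ M * Q := by
  simp only [graphPairing_apply, h, transpose_add, transpose_mul, Matrix.add_mul,
    Matrix.mul_add, Matrix.mul_assoc]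
  abel

theorem isSymm_of_isotropicGraph {s₁ s₂ s₃ P Q : Matrix n n R}
    (h : graphMatrix s₃ = graphMatrix s₁ * P + graphMatrix s₂ * Q)
    {M : Matrix (n ⊕ n) (n ⊕ n) R} (hM : Mᵀ = -M) (h₁ : IsotropicGraph M s₁)
    (h₂ : IsotropicGraph M s₂) (h₃ : IsotropicGraph M s₃) :
    (Pᵀ * graphPairing s₁ s₂ M * Q).IsSymm := by
  have key := graphPairing_eq_of_graphMatrix_eq h M
  rw [h₁, h₂, h₃, graphPairing_swap hM s₁ s₂] at key
  rw [IsSymm, transpose_mul, transpose_mul, transpose_transpose, ← Matrix.mul_assoc]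
  simp only [Matrix.mul_zero, Matrix.zero_mul, zero_add, add_zero, Matrix.mul_neg,
    Matrix.neg_mul] at key
  exact (add_neg_eq_zero.1 key.symm).symm

def skewIsotropicSubmodule (S : Set (Matrix n n R)) :
    Submodule R (Matrix (n ⊕ n) (n ⊕ n) R) where
  carrier := {M | Mᵀ = -M ∧ ∀ s ∈ S, IsotropicGraph M s}
  add_mem' {M N} hM hN := ⟨by rw [transpose_add, hM.1, hN.1, neg_add], fun s hs => by
    rw [IsotropicGraph, map_add, hM.2 s hs, hN.2 s hs, add_zero]⟩
  zero_mem' := ⟨by rw [transpose_zero, neg_zero], fun s _ => map_zero _⟩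
  smul_mem' c M hM := ⟨by rw [transpose_smul, hM.1, smul_neg], fun s hs => by
    rw [IsotropicGraph, map_smul, hM.2 s hs, smul_zero]⟩

theorem skewIsotropicSubmodule_anti {S T : Set (Matrix n n R)} (h : S ⊆ T) :
    skewIsotropicSubmodule T ≤ skewIsotropicSubmodule S :=
  fun _ hM => ⟨hM.1, fun s hs => hM.2 s (h hs)⟩

end GraphPairing

section SymmetricBound

variable {n K : Type*} [Fintype n] [Field K]

theorem finrank_le_of_injective_of_isSymm {V : Type*} [AddCommGroup V] [Module K V]
    (f : V →ₗ[K] Matrix n n K) (hf : Function.Injective f) (hsymm : ∀ v, (f v).IsSymm) :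
    finrank K V ≤ Fintype.card n * (Fintype.card n + 1) / 2 := by
  -- A symmetric matrix is determined by one entry for each unordered pair `{i, j}`.
  let u : Matrix n n K →ₗ[K] Sym2 n → K :=
    LinearMap.pi fun z => entryLinearMap K K z.out.1 z.out.2
  have hu : Function.Injective (u ∘ₗ f) := by
    refine (injective_iff_map_eq_zero _).2 fun v hv => hf ?_
    rw [map_zero]
    ext i j
    have hij := congr_fun hv s(i, j)
    simp only [LinearMap.comp_apply, LinearMap.pi_apply, entryLinearMap_apply, u,
      Pi.zero_apply] at hij
    rcases (Sym2.mk_eq_mk_iff (p := s(i, j).out) (q := (i, j))).1 (Quot.out_eq _) with h | h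
    · rwa [h] at hij
    · rw [h, Prod.swap_prod_mk, (hsymm v).apply] at hij
      exact hij
  calc finrank K V ≤ finrank K (Sym2 n → K) := LinearMap.finrank_le_finrank_of_injective hu
    _ = Fintype.card n * (Fintype.card n + 1) / 2 := by
      rw [finrank_fintype_fun_eq_card, Sym2.card, Nat.choose_two_right, Nat.add_sub_cancel,
        Nat.mul_comm]

end SymmetricBound

section ThreeGraphs

variable {n K : Type*} [Fintype n] [DecidableEq n] [Field K]

theorem eq_zero_of_isotropicGraph_of_graphPairing_eq_zero {s₁ s₂ : Matrix n n K}
    (h₁₂ : (s₁ - s₂).det ≠ 0) {M : Matrix (n ⊕ n) (n ⊕ n) K} (hM : Mᵀ = -M)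
    (h₁ : IsotropicGraph M s₁) (h₂ : IsotropicGraph M s₂) (h : graphPairing s₁ s₂ M = 0) :
    M = 0 := by
  set Q : Matrix (n ⊕ n) (n ⊕ n) K := fromBlocks s₁ s₂ 1 1
  have hQ : IsUnit Q.det := by
    rw [det_fromBlocks_one₂₂, Matrix.mul_one]
    exact h₁₂.isUnit
  have hQM : Qᵀ * M * Q = 0 := by
    have h₂₁ : graphPairing s₂ s₁ M = 0 := by
      rw [graphPairing_swap hM, h, transpose_zero, neg_zero]
    calc Qᵀ * M * Q = fromBlocks (graphPairing s₁ s₁ M) (graphPairing s₁ s₂ M)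
          (graphPairing s₂ s₁ M) (graphPairing s₂ s₂ M) := by
          simp only [Q, ← fromCols_fromRows_eq_fromBlocks, transpose_fromCols, fromRows_mul,
            mul_fromCols, graphPairing_apply, graphMatrix]
      _ = 0 := by rw [h₁, h, h₂₁, h₂, fromBlocks_zero]
  rwa [(Q.isUnit_iff_isUnit_det.2 hQ).mul_left_eq_zero,
    (Qᵀ.isUnit_iff_isUnit_det.2 (by rwa [det_transpose])).mul_right_eq_zero] at hQM

theorem exists_graphMatrix_eq_mul_add_mul {s₁ s₂ s₃ : Matrix n n K} (h₁₂ : (s₁ - s₂).det ≠ 0)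
    (h₁₃ : (s₁ - s₃).det ≠ 0) (h₂₃ : (s₂ - s₃).det ≠ 0) :
    ∃ P Q : Matrix n n K, P.det ≠ 0 ∧ Q.det ≠ 0 ∧
      graphMatrix s₃ = graphMatrix s₁ * P + graphMatrix s₂ * Q := by
  have hD : IsUnit (s₁ - s₂).det := h₁₂.isUnit
  -- the solution of `s₁ P + s₂ Q = s₃`, `P + Q = 1`
  refine ⟨(s₁ - s₂)⁻¹ * (s₃ - s₂), (s₁ - s₂)⁻¹ * (s₁ - s₃), ?_, ?_, ?_⟩
  · rw [← neg_sub s₂ s₃, det_mul, det_neg, det_nonsing_inv, Ring.inverse_eq_inv']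
    simp [h₁₂, h₂₃]
  · rw [det_mul, det_nonsing_inv, Ring.inverse_eq_inv']
    simp [h₁₂, h₁₃]
  · have hP : (s₁ - s₂) * ((s₁ - s₂)⁻¹ * (s₃ - s₂)) = s₃ - s₂ :=
      mul_nonsing_inv_cancel_left _ _ hD
    have hPQ : (s₁ - s₂)⁻¹ * (s₃ - s₂) + (s₁ - s₂)⁻¹ * (s₁ - s₃) = 1 := by
      rw [← Matrix.mul_add, show s₃ - s₂ + (s₁ - s₃) = s₁ - s₂ by abel, nonsing_inv_mul _ hD]
    generalize (s₁ - s₂)⁻¹ * (s₃ - s₂) = P at hP hPQ ⊢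
    generalize (s₁ - s₂)⁻¹ * (s₁ - s₃) = Q at hPQ ⊢
    obtain rfl : Q = 1 - P := eq_sub_of_add_eq' hPQ
    have hs : s₁ * P + s₂ * (1 - P) = s₃ := by
      calc s₁ * P + s₂ * (1 - P) = s₂ + (s₁ - s₂) * P := by noncomm_ring
        _ = s₃ := by rw [hP]; abel
    ext (i | i) j
    · simp [graphMatrix, ← hs]
    · simp [graphMatrix]

theorem finrank_skewIsotropicSubmodule_le {s₁ s₂ s₃ : Matrix n n K} (h₁₂ : (s₁ - s₂).det ≠ 0)
    (h₁₃ : (s₁ - s₃).det ≠ 0) (h₂₃ : (s₂ - s₃).det ≠ 0) :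
    finrank K (skewIsotropicSubmodule {s₁, s₂, s₃}) ≤
      Fintype.card n * (Fintype.card n + 1) / 2 := by
  obtain ⟨P, Q, hP, hQ, h⟩ := exists_graphMatrix_eq_mul_add_mul h₁₂ h₁₃ h₂₃
  refine finrank_le_of_injective_of_isSymm (LinearMap.mulLeft K Pᵀ ∘ₗ LinearMap.mulRight K Q ∘ₗ
    graphPairing s₁ s₂ ∘ₗ (skewIsotropicSubmodule _).subtype) ?_ ?_
  · refine (injective_iff_map_eq_zero _).2 fun ⟨M, hM, hiso⟩ hM0 => Subtype.ext ?_
    simp only [LinearMap.comp_apply, LinearMap.mulLeft_apply, LinearMap.mulRight_apply,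
      Submodule.subtype_apply] at hM0
    rw [(Pᵀ.isUnit_iff_isUnit_det.2 (by rwa [det_transpose, isUnit_iff_ne_zero])).mul_right_eq_zero,
      (Q.isUnit_iff_isUnit_det.2 hQ.isUnit).mul_left_eq_zero] at hM0
    exact eq_zero_of_isotropicGraph_of_graphPairing_eq_zero h₁₂ hM (hiso s₁ (by simp))
      (hiso s₂ (by simp)) hM0
  · rintro ⟨M, hM, hiso⟩
    simpa [Matrix.mul_assoc] using isSymm_of_isotropicGraph h hM (hiso s₁ (by simp))
      (hiso s₂ (by simp)) (hiso s₃ (by simp))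

end ThreeGraphs

theorem finrank_le_finrank_of_map_algebraMap_mem {K L m p : Type*} [Field K] [Field L]
    [Algebra K L] [Fintype m] [Fintype p] {V : Submodule K (Matrix m p K)}
    {W : Submodule L (Matrix m p L)} (h : ∀ M ∈ V, M.map (algebraMap K L) ∈ W) :
    finrank K V ≤ finrank L W := by
  let b := Module.finBasis K V
  let e : (m × p → K) ≃ₗ[K] Matrix m p K := (LinearEquiv.curry K K m p).trans (ofLinearEquiv K)
  have hv : LinearIndependent K fun i => e.symm (b i) :=
    b.linearIndependent.map' (e.symm.toLinearMap ∘ₗ V.subtype)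
      (by rw [LinearEquiv.ker_comp, Submodule.ker_subtype])
  have hw : LinearIndependent L fun i =>
      (⟨(b i : Matrix m p K).map (algebraMap K L), h _ (b i).2⟩ : W) := by
    refine LinearIndependent.of_comp
      (((LinearEquiv.curry L L m p).trans (ofLinearEquiv L)).symm.toLinearMap ∘ₗ W.subtype) ?_
    exact linearIndependent_algebraMap_comp_iff.2 hv
  simpa using hw.fintype_card_le_finrank

theorem isotropicGraph_ratCast_map_iff {n F L : Type*} [Fintype n] [DecidableEq n] [Field F]
    [CharZero F] [Field L] (f : F →+* L) (M : Matrix (n ⊕ n) (n ⊕ n) ℚ)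
    (s : Matrix n n F) :
    IsotropicGraph (M.map (↑)) (s.map f) ↔ IsotropicGraph (M.map (↑)) s := by
  rw [← isotropicGraph_map_iff f.injective (M := M.map (↑)), Matrix.map_map]
  simp only [Function.comp_def, map_ratCast]

theorem isotropicGraph_ratCast_map_of_map {n F L : Type*} [Fintype n] [DecidableEq n] [Field F]
    [CharZero F] [Field L] (φ ψ : F →+* L) (M : Matrix (n ⊕ n) (n ⊕ n) ℚ)
    (s : Matrix n n F) (h : IsotropicGraph (M.map (↑)) (s.map φ)) :
    IsotropicGraph (M.map (↑)) (s.map ψ) :=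
  (isotropicGraph_ratCast_map_iff ψ M s).2 ((isotropicGraph_ratCast_map_iff φ M s).1 h)

theorem nonempty_ringHom_real_of_odd_finrank {K : Type*} [Field K] [NumberField K]
    (h : Odd (finrank ℚ K)) : Nonempty (K →+* ℝ) := by
  classical
  obtain ⟨w⟩ := Fintype.card_pos_iff.1 (NumberField.InfinitePlace.nrRealPlaces_pos_of_odd_finrank h)
  exact ⟨NumberField.InfinitePlace.embedding_of_isReal w.2⟩

theorem map_nonsing_inv {n K L : Type*} [Fintype n] [DecidableEq n] [Field K] [Field L]
    (f : K →+* L) (M : Matrix n n K) : M⁻¹.map f = (M.map f)⁻¹ := by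
  rw [inv_def, inv_def, Ring.inverse_eq_inv', Ring.inverse_eq_inv', ← f.mapMatrix_apply,
    ← f.mapMatrix_apply, ← RingHom.map_det, ← RingHom.map_adjugate, ← map_inv₀ f]
  ext
  simp

theorem eq_zero_of_vecMul_eq_vecMul_of_posDef {m k R : Type*} [Fintype m] [Fintype k] [CommRing R]
    [StarRing R] [PartialOrder R] (c : R) {P Q : Matrix m k R} {F : Matrix k k R}
    (hP : (c • (P * F * Pᴴ)).PosDef) (hQ : Q * F * Qᴴ = 0) {v : m → R}
    (hv : v ᵥ* P = v ᵥ* Q) : v = 0 := by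
  have quad (A : Matrix m k R) :
      v ⬝ᵥ ((A * F * Aᴴ) *ᵥ star v) = (v ᵥ* A ᵥ* F) ⬝ᵥ star (v ᵥ* A) := by
    rw [← mulVec_mulVec, mulVec_conjTranspose, star_star, dotProduct_mulVec, ← vecMul_vecMul]
  by_contra hv0
  have hpos := hP.dotProduct_mulVec_pos (star_ne_zero.2 hv0)
  rw [star_star, smul_mulVec, dotProduct_smul, quad, hv, ← quad, hQ, zero_mulVec,
    dotProduct_zero, smul_zero] at hpos
  exact lt_irrefl _ hpos

section Complex

variable {n : Type*} [Fintype n] [DecidableEq n]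

theorem det_sub_ne_zero_of_posDef (c : ℂ) {τ : Matrix n n ℂ} {t : Matrix n n ℝ}
    {F : Matrix (n ⊕ n) (n ⊕ n) ℂ}
    (hτ : (c • (fromCols τ (1 : Matrix n n ℂ) * F * (fromCols τ (1 : Matrix n n ℂ))ᴴ)).PosDef)
    (ht : IsotropicGraph F (t.map Complex.ofReal)ᵀ) : (τ - t.map Complex.ofReal).det ≠ 0 := by
  rw [Ne, ← exists_vecMul_eq_zero_iff]
  rintro ⟨v, hv0, hv⟩
  have hreal : (fromCols (t.map Complex.ofReal) (1 : Matrix n n ℂ))ᴴ =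
      (fromCols (t.map Complex.ofReal) 1)ᵀ := by
    rw [← Matrix.map_one _ Complex.ofReal_zero Complex.ofReal_one, ← fromCols_map,
      ← conjTranspose_map _ fun x => by simp,
      conjTranspose_eq_transpose_of_trivial, transpose_map]
  rw [isotropicGraph_transpose_iff, ← hreal] at ht
  rw [vecMul_sub, sub_eq_zero] at hv
  exact hv0 (eq_zero_of_vecMul_eq_vecMul_of_posDef c hτ ht
    (by rw [vecMul_fromCols, vecMul_fromCols, hv]))

theorem det_sub_conj_ne_zero {τ : Matrix n n ℂ} (him : (τ.map Complex.im).det ≠ 0) :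
    (τ - τ.map (starRingEnd ℂ)).det ≠ 0 := by
  have h : τ - τ.map (starRingEnd ℂ) =
      (2 * Complex.I) • (τ.map Complex.im).map Complex.ofRealHom := by
    ext i j
    simp [Complex.sub_conj]
    ring
  rw [h, det_smul, ← RingHom.mapMatrix_apply, ← RingHom.map_det]
  simp [him]

theorem det_conj_sub_ofReal_ne_zero {τ : Matrix n n ℂ} {t : Matrix n n ℝ}
    (h : (τ - t.map Complex.ofReal).det ≠ 0) :
    (τ.map (starRingEnd ℂ) - t.map Complex.ofReal).det ≠ 0 := by
  have hconj : τ.map (starRingEnd ℂ) - t.map Complex.ofReal =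
      (τ - t.map Complex.ofReal).map (starRingEnd ℂ) := by
    ext
    simp
  rw [hconj, ← RingHom.mapMatrix_apply, ← RingHom.map_det]
  simpa using h

end Complex

section PicardNumber

theorem mapQC_apply (g : ℕ) (X : Matrix (Fin g) (Fin g) ℚ) : mapQC g X = X.map (↑) := by
  ext
  simp [mapQC]

def blockForm (R n : Type*) [CommRing R] :
    (Matrix n n R × Matrix n n R × Matrix n n R) →ₗ[R] Matrix (n ⊕ n) (n ⊕ n) R where
  toFun x := fromBlocks x.2.2 x.2.1ᵀ (-x.2.1) x.1
  map_add' x y := by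
    simp only [Prod.fst_add, Prod.snd_add, transpose_add, neg_add, fromBlocks_add]
  map_smul' c x := by
    simp only [Prod.smul_fst, Prod.smul_snd, transpose_smul, smul_neg, fromBlocks_smul,
      RingHom.id_apply]

theorem blockForm_apply {R n : Type*} [CommRing R]
    (x : Matrix n n R × Matrix n n R × Matrix n n R) :
    blockForm R n x = fromBlocks x.2.2 x.2.1ᵀ (-x.2.1) x.1 := rfl

theorem blockForm_injective {R n : Type*} [CommRing R] : Function.Injective (blockForm R n) :=
  fun x y h => by
    obtain ⟨hC, -, hB, hA⟩ := fromBlocks_inj.1 h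
    exact Prod.ext hA (Prod.ext (neg_injective hB) hC)

def entryFieldMatrix (g : ℕ) (τ : Matrix (Fin g) (Fin g) ℂ) :
    Matrix (Fin g) (Fin g) (EntryField g τ) :=
  of fun i j => ⟨τ i j, subset_adjoin ℚ _ ⟨i, j, rfl⟩⟩

theorem entryFieldMatrix_map_algebraMap (g : ℕ) (τ : Matrix (Fin g) (Fin g) ℂ) :
    (entryFieldMatrix g τ).map (algebraMap (EntryField g τ) ℂ) = τ := rfl

theorem map_blockForm_mem_skewIsotropicSubmodule {g : ℕ} {τ : Matrix (Fin g) (Fin g) ℂ}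
    {x : Matrix (Fin g) (Fin g) ℚ × Matrix (Fin g) (Fin g) ℚ × Matrix (Fin g) (Fin g) ℚ}
    (hx : x ∈ NSSpace g τ) :
    (blockForm ℚ (Fin g) x).map (↑) ∈ skewIsotropicSubmodule
      (Set.range fun ψ : EntryField g τ →+* ℂ => (entryFieldMatrix g τ).map ψ) := by
  obtain ⟨hA, hC, hrel⟩ := hx
  have hskew : (blockForm ℚ (Fin g) x)ᵀ = -blockForm ℚ (Fin g) x := by
    rw [blockForm_apply, fromBlocks_transpose, hA, hC, transpose_transpose, transpose_neg,
      fromBlocks_neg, neg_neg]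
  refine ⟨by rw [← transpose_map, hskew, Matrix.map_neg _ Rat.cast_neg], ?_⟩
  rintro _ ⟨ψ, rfl⟩
  refine isotropicGraph_ratCast_map_of_map (algebraMap (EntryField g τ) ℂ) ψ _ _ ?_
  rw [entryFieldMatrix_map_algebraMap, IsotropicGraph, blockForm_apply, fromBlocks_map,
    transpose_map, Matrix.map_neg _ Rat.cast_neg, graphPairing_fromBlocks]
  simpa only [mapQC_apply] using hrel

theorem picard_le_finrank_skewIsotropicSubmodule (g : ℕ) (τ : Matrix (Fin g) (Fin g) ℂ) :
    picard g τ ≤ finrank ℂ (skewIsotropicSubmodule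
      (Set.range fun ψ : EntryField g τ →+* ℂ => (entryFieldMatrix g τ).map ψ)) :=
  calc picard g τ = finrank ℚ ((NSSpace g τ).map (blockForm ℚ (Fin g))) :=
        (Submodule.equivMapOfInjective _ blockForm_injective _).finrank_eq
    _ ≤ _ := finrank_le_finrank_of_map_algebraMap_mem fun _ ⟨_, hx, hM⟩ =>
        hM ▸ map_blockForm_mem_skewIsotropicSubmodule hx

theorem RiemannRelations.exists_isotropicGraph_posDef {g : ℕ} {τ : Matrix (Fin g) (Fin g) ℂ}
    (h : RiemannRelations g τ) :
    ∃ F : Matrix (Fin g ⊕ Fin g) (Fin g ⊕ Fin g) ℚ, IsotropicGraph (F.map (↑)) τᵀ ∧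
      (Complex.I • (fromCols τ (1 : Matrix (Fin g) (Fin g) ℂ) * F.map (Rat.cast : ℚ → ℂ) *
        (fromCols τ (1 : Matrix (Fin g) (Fin g) ℂ))ᴴ)).PosDef := by
  obtain ⟨E, -, -, hrel, hpos⟩ := h
  have hF : (E.map (Int.cast : ℤ → ℂ))⁻¹ = (E.map (Int.cast : ℤ → ℚ))⁻¹.map (↑) := by
    rw [show E.map (Int.cast : ℤ → ℂ) = (E.map (Int.cast : ℤ → ℚ)).map (Rat.castHom ℂ) by
      ext; simp, ← map_nonsing_inv]
    rfl
  rw [PeriodMatrix, hF] at hrel hpos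
  exact ⟨_, isotropicGraph_transpose_iff.2 hrel, hpos⟩

end PicardNumber

theorem picard_le_of_odd_degree_general
    (g : ℕ) (τ : Matrix (Fin g) (Fin g) ℂ)
    (him : (τ.map Complex.im).det ≠ 0)
    (hab : RiemannRelations g τ)
    (hfin : FiniteDimensional ℚ (EntryField g τ))
    (hodd : Odd (Module.finrank ℚ (EntryField g τ))) :
    picard g τ ≤ g * (g + 1) / 2 := by
  obtain ⟨F, hrel, hpos⟩ := hab.exists_isotropicGraph_posDef
  have : NumberField (EntryField g τ) := ⟨⟩
  obtain ⟨σ⟩ := nonempty_ringHom_real_of_odd_finrank hodd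
  set t := (entryFieldMatrix g τ).map σ
  have h₂ : (τ - t.map Complex.ofReal).det ≠ 0 := det_sub_ne_zero_of_posDef _ hpos
    (isotropicGraph_ratCast_map_of_map (algebraMap _ ℂ) (Complex.ofRealHom.comp σ) F _ hrel)
  have hsub : {τ, τ.map (starRingEnd ℂ), t.map Complex.ofReal} ⊆
      Set.range fun ψ : EntryField g τ →+* ℂ => (entryFieldMatrix g τ).map ψ := by
    simp only [Set.insert_subset_iff, Set.singleton_subset_iff]
    exact ⟨⟨_, entryFieldMatrix_map_algebraMap g τ⟩,
      ⟨(starRingEnd ℂ).comp (algebraMap _ ℂ), rfl⟩, ⟨Complex.ofRealHom.comp σ, rfl⟩⟩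
  calc picard g τ ≤ finrank ℂ (skewIsotropicSubmodule
        (Set.range fun ψ : EntryField g τ →+* ℂ => (entryFieldMatrix g τ).map ψ)) :=
        picard_le_finrank_skewIsotropicSubmodule g τ
    _ ≤ finrank ℂ (skewIsotropicSubmodule {τ, τ.map (starRingEnd ℂ), t.map Complex.ofReal}) :=
        Submodule.finrank_mono (skewIsotropicSubmodule_anti hsub)
    _ ≤ g * (g + 1) / 2 := by
        simpa using finrank_skewIsotropicSubmodule_le (det_sub_conj_ne_zero him) h₂
          (det_conj_sub_ofReal_ne_zero h₂)

theorem picard_le_of_odd_degree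
    (g : ℕ) (hg : 1 ≤ g) (τ : Matrix (Fin g) (Fin g) ℂ)
    (him : (τ.map Complex.im).det ≠ 0)
    (hab : RiemannRelations g τ)
    (hfin : FiniteDimensional ℚ (EntryField g τ))
    (hodd : Odd (Module.finrank ℚ (EntryField g τ))) :
    picard g τ ≤ g * (g + 1) / 2 :=
  picard_le_of_odd_degree_general g τ him hab hfin hodd

end
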